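/- For a linear delay control system ẋ(t) = Σ_{i=0}^p A_i x(t−h_i) + Σ_{i=0}^p B_i u(t−h_i) with 0 = h₀ < h₁ < ⋯ < h_p = h and convex compact control range Ω containing 0, there exists a unique chain control set E in the state space M₂ = ℝⁿ × L²([−h,0],ℝⁿ), provided A_p is invertible. Moreover 0 ∈ E. -/
import Mathlib


open MeasureTheory

section ChainControl

variable {M₂ : Type*} [NormedAddCommGroup M₂] [NormedSpace ℝ M₂] [CompleteSpace M₂]
  {m p : ℕ}

/-- The mild solution `φ(t, y, u)` of the delay control system in the state space
`M₂`, written via the semigroup `T` and the bounded input operator `B` applied to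
the delayed control values `(u(t-h₀),…,u(t-h_p))`. -/
noncomputable def mildSol (T : ℝ → M₂ →L[ℝ] M₂)
    (B : ((Fin (p + 1)) → EuclideanSpace ℝ (Fin m)) →L[ℝ] M₂)
    (h : Fin (p + 1) → ℝ) :
    ℝ → M₂ → (ℝ → EuclideanSpace ℝ (Fin m)) → M₂ :=
  fun t y u => T t y + ∫ s in (0:ℝ)..t, T (t - s) (B fun i => u (s - h i))

/-- Admissible controls: measurable functions with values in `Ω`. -/
def Admissible (Ω : Set (EuclideanSpace ℝ (Fin m))) :
    Set (ℝ → EuclideanSpace ℝ (Fin m)) :=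
  {u | Measurable u ∧ ∀ s, u s ∈ Ω}

/-- The right shift of a control. -/
def shiftC (s : ℝ) (u : ℝ → EuclideanSpace ℝ (Fin m)) :
    ℝ → EuclideanSpace ℝ (Fin m) := fun r => u (s + r)

/-- A controlled `(ε,τ)`-chain from `a` to `b`. -/
def ControlledChain (φ : ℝ → M₂ → (ℝ → EuclideanSpace ℝ (Fin m)) → M₂)
    (𝒰 : Set (ℝ → EuclideanSpace ℝ (Fin m))) (ε τ : ℝ) (a b : M₂) : Prop :=
  ∃ (q : ℕ) (ys : ℕ → M₂) (us : ℕ → ℝ → EuclideanSpace ℝ (Fin m)) (ts : ℕ → ℝ),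
    1 ≤ q ∧ ys 0 = a ∧ ys q = b ∧
    ∀ j < q, us j ∈ 𝒰 ∧ τ ≤ ts j ∧ ‖φ (ts j) (ys j) (us j) - ys (j + 1)‖ < ε

/-- `E` is weakly invariant: through every point of `E` there is an admissible
control and an entire trajectory staying in `E` for all times `t ∈ ℝ`. -/
def WeaklyInvariant (φ : ℝ → M₂ → (ℝ → EuclideanSpace ℝ (Fin m)) → M₂)
    (𝒰 : Set (ℝ → EuclideanSpace ℝ (Fin m))) (E : Set M₂) : Prop :=
  ∀ y ∈ E, ∃ u ∈ 𝒰, ∃ γ : ℝ → M₂, γ 0 = y ∧ (∀ s : ℝ, γ s ∈ E) ∧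
    ∀ s t : ℝ, 0 ≤ t → φ t (γ s) (shiftC s u) = γ (s + t)

/-- `E` is chain controllable: it is nonempty and any two of its points are joined
by controlled `(ε,τ)`-chains for all `ε, τ > 0`. -/
def ChainControllable (φ : ℝ → M₂ → (ℝ → EuclideanSpace ℝ (Fin m)) → M₂)
    (𝒰 : Set (ℝ → EuclideanSpace ℝ (Fin m))) (E : Set M₂) : Prop :=
  E.Nonempty ∧ ∀ y ∈ E, ∀ z ∈ E, ∀ ε > 0, ∀ τ > 0, ControlledChain φ 𝒰 ε τ y z

/-- A chain control set: a maximal weakly invariant chain controllable set. -/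
def IsChainControlSet (φ : ℝ → M₂ → (ℝ → EuclideanSpace ℝ (Fin m)) → M₂)
    (𝒰 : Set (ℝ → EuclideanSpace ℝ (Fin m))) (E : Set M₂) : Prop :=
  WeaklyInvariant φ 𝒰 E ∧ ChainControllable φ 𝒰 E ∧
    ∀ E' : Set M₂, E ⊆ E' → WeaklyInvariant φ 𝒰 E' → ChainControllable φ 𝒰 E' → E' = E

end ChainControl

set_option linter.unusedSectionVars false

section Aux

variable {M₂ : Type*} [NormedAddCommGroup M₂] [NormedSpace ℝ M₂] [CompleteSpace M₂]
  {m p : ℕ}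

lemma mildSol_smul (T : ℝ → M₂ →L[ℝ] M₂)
    (B : ((Fin (p + 1)) → EuclideanSpace ℝ (Fin m)) →L[ℝ] M₂)
    (h : Fin (p + 1) → ℝ) (c t : ℝ) (y : M₂) (u : ℝ → EuclideanSpace ℝ (Fin m)) :
    mildSol T B h t (c • y) (fun s => c • u s) = c • mildSol T B h t y u := by
  unfold mildSol
  have key : ∀ s : ℝ, (T (t - s)) (B fun i => c • u (s - h i))
      = c • (T (t - s)) (B fun i => u (s - h i)) := by
    intro s
    have : (fun i => c • u (s - h i)) = c • (fun i => u (s - h i)) := rfl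
    rw [this, _root_.map_smul, _root_.map_smul]
  rw [_root_.map_smul]
  simp only [key, intervalIntegral.integral_smul, smul_add]

lemma mildSol_zero (T : ℝ → M₂ →L[ℝ] M₂)
    (B : ((Fin (p + 1)) → EuclideanSpace ℝ (Fin m)) →L[ℝ] M₂)
    (h : Fin (p + 1) → ℝ) (t : ℝ) :
    mildSol T B h t 0 (fun _ => 0) = 0 := by
  unfold mildSol
  have : (fun i : Fin (p+1) => (0 : EuclideanSpace ℝ (Fin m))) = 0 := rfl
  simp [this]

lemma smul_mem_admissible {Ω : Set (EuclideanSpace ℝ (Fin m))}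
    (hΩconv : Convex ℝ Ω) (hΩ0 : (0 : EuclideanSpace ℝ (Fin m)) ∈ Ω)
    {c : ℝ} (hc : c ∈ Set.Icc (0:ℝ) 1) {u} (hu : u ∈ Admissible Ω) :
    (fun s => c • u s) ∈ Admissible Ω := by
  refine ⟨hu.1.const_smul c, fun s => ?_⟩
  have := hΩconv hΩ0 (hu.2 s) (a := 1 - c) (b := c) (by linarith [hc.2]) hc.1 (by ring)
  simpa using this

lemma chain_trans {φ : ℝ → M₂ → (ℝ → EuclideanSpace ℝ (Fin m)) → M₂}
    {𝒰 : Set (ℝ → EuclideanSpace ℝ (Fin m))} {ε τ : ℝ} {a b c : M₂}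
    (h1 : ControlledChain φ 𝒰 ε τ a b) (h2 : ControlledChain φ 𝒰 ε τ b c) :
    ControlledChain φ 𝒰 ε τ a c := by
  obtain ⟨q1, ys1, us1, ts1, hq1, h10, h1q, hs1⟩ := h1
  obtain ⟨q2, ys2, us2, ts2, hq2, h20, h2q, hs2⟩ := h2
  refine ⟨q1 + q2, fun j => if j < q1 then ys1 j else ys2 (j - q1),
    fun j => if j < q1 then us1 j else us2 (j - q1),
    fun j => if j < q1 then ts1 j else ts2 (j - q1), by omega, by simp only [if_pos (Nat.lt_of_lt_of_le Nat.zero_lt_one hq1)]; exact h10, ?_, ?_⟩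
  · have : ¬ (q1 + q2 < q1) := by omega
    simp [this, h2q]
  · intro j hj
    by_cases hjq : j < q1
    · have hnext : (if j + 1 < q1 then ys1 (j+1) else ys2 (j + 1 - q1)) = ys1 (j + 1) := by
        by_cases hj1 : j + 1 < q1
        · simp [hj1]
        · have hj1' : j + 1 = q1 := by omega
          simp only [hj1, if_false]
          rw [show j + 1 - q1 = 0 from by omega, h20, ← h1q, hj1']
      simp only [hjq, if_true, hnext]
      exact hs1 j hjq
    · have hlt : j - q1 < q2 := by omega
      have hnext : ¬ (j + 1 < q1) := by omega
      have hrw : j + 1 - q1 = (j - q1) + 1 := by omega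
      simp only [hjq, hnext, if_false, hrw]
      exact hs2 (j - q1) hlt

lemma chain_graded {φ : ℝ → M₂ → (ℝ → EuclideanSpace ℝ (Fin m)) → M₂}
    {𝒰 : Set (ℝ → EuclideanSpace ℝ (Fin m))}
    (hsm : ∀ (c t : ℝ) (y : M₂) (u : ℝ → EuclideanSpace ℝ (Fin m)),
      φ t (c • y) (fun s => c • u s) = c • φ t y u)
    (had : ∀ c ∈ Set.Icc (0:ℝ) 1, ∀ u ∈ 𝒰, (fun s => c • u s) ∈ 𝒰)
    {y : M₂} (hy : ∀ ε > 0, ∀ τ > 0, ControlledChain φ 𝒰 ε τ y y)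
    {α β : ℝ} (hα : α ∈ Set.Icc (0:ℝ) 1) (hβ : β ∈ Set.Icc (0:ℝ) 1)
    {ε τ : ℝ} (hε : 0 < ε) (hτ : 0 < τ) :
    ControlledChain φ 𝒰 ε τ (β • y) (α • y) := by
  obtain ⟨q, ys, us, ts, hq1, hys0, hysq, hstep⟩ := hy (ε/2) (by positivity) τ hτ
  have hqpos : 0 < q := hq1
  -- bound for the norms of the chain points
  set M : ℝ := ∑ j ∈ Finset.range (q + 1), ‖ys j‖ with hM
  have hMb : ∀ j ≤ q, ‖ys j‖ ≤ M := by
    intro j hj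
    exact Finset.single_le_sum (f := fun j => ‖ys j‖)
      (fun i _ => norm_nonneg _) (Finset.mem_range.mpr (by omega))
  have hM0 : 0 ≤ M := Finset.sum_nonneg fun i _ => norm_nonneg _
  obtain ⟨n, hn⟩ := exists_nat_gt (2 * M / ε)
  set N : ℕ := q * (n + 1) with hNdef
  have hN1 : 1 ≤ N := Nat.one_le_iff_ne_zero.mpr (by positivity)
  have hNpos : (0:ℝ) < N := by exact_mod_cast hN1
  have hNM : M / N < ε / 2 := by
    have h1 : (2 * M / ε) < N := by
      have : (n:ℝ) < N := by
        have : n + 1 ≤ N := by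
          calc n + 1 = 1 * (n+1) := (one_mul _).symm
          _ ≤ q * (n+1) := Nat.mul_le_mul_right _ hq1
        exact_mod_cast Nat.lt_of_lt_of_le (Nat.lt_succ_self n) this
      linarith
    rw [div_lt_iff₀ hε] at h1
    rw [div_lt_iff₀ hNpos]
    linarith
  -- cycle identity
  have hcyc : ys q = ys 0 := by rw [hys0, hysq]
  have hmod : ∀ j : ℕ, ys ((j + 1) % q) = ys (j % q + 1) := by
    intro j
    have h1 : (j + 1) % q = (j % q + 1) % q := (Nat.mod_add_mod j q 1).symm
    rcases Nat.lt_or_ge (j % q + 1) q with hlt | hge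
    · rw [h1, Nat.mod_eq_of_lt hlt]
    · have heq : j % q + 1 = q := by
        have := Nat.mod_lt j hqpos
        omega
      rw [h1, heq, Nat.mod_self, ← hcyc]
  -- the graded scaling coefficients
  set c : ℕ → ℝ := fun j => (1 - (j:ℝ)/N) * β + ((j:ℝ)/N) * α with hcdef
  have hc01 : ∀ j ≤ N, c j ∈ Set.Icc (0:ℝ) 1 := by
    intro j hj
    have h0 : (0:ℝ) ≤ (j:ℝ)/N := by positivity
    have h1 : (j:ℝ)/N ≤ 1 := by
      rw [div_le_one hNpos]; exact_mod_cast hj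
    constructor
    · have := hα.1; have := hβ.1
      have : 0 ≤ (1 - (j:ℝ)/N) * β := mul_nonneg (by linarith) hβ.1
      have : 0 ≤ ((j:ℝ)/N) * α := mul_nonneg h0 hα.1
      simp only [hcdef]; nlinarith
    · have := hα.2; have := hβ.2
      simp only [hcdef]; nlinarith
  have hcdiff : ∀ j : ℕ, |c j - c (j + 1)| ≤ 1 / N := by
    intro j
    have h1 : c j - c (j + 1) = (β - α) / N := by
      simp only [hcdef]
      push_cast
      field_simp
      ring
    rw [h1, abs_div, abs_of_pos hNpos]
    have : |β - α| ≤ 1 := by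
      rw [abs_le]
      constructor <;> [linarith [hα.2, hβ.1]; linarith [hα.1, hβ.2]]
    gcongr
  refine ⟨N, fun j => c j • ys (j % q), fun j => fun s => c j • us (j % q) s,
    fun j => ts (j % q), hN1, ?_, ?_, ?_⟩
  · have hc0 : c 0 = β := by simp [hcdef]
    simp only [Nat.zero_mod, hc0, hys0]
  · show c N • ys (N % q) = α • y
    have hcN : c N = α := by
      simp only [hcdef]
      rw [div_self (ne_of_gt hNpos)]
      ring
    have hNq : N % q = 0 := by
      rw [hNdef]
      exact Nat.mul_mod_right q (n + 1)
    rw [hcN, hNq, hys0]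
  · intro j hj
    beta_reduce
    have hjq : j % q < q := Nat.mod_lt j hqpos
    obtain ⟨hu, ht, hnorm⟩ := hstep (j % q) hjq
    refine ⟨had (c j) (hc01 j (by omega)) _ hu, ht, ?_⟩
    rw [hsm, hmod j]
    set P := φ (ts (j % q)) (ys (j % q)) (us (j % q)) with hP
    set z := ys (j % q + 1) with hz
    have hsplit : c j • P - c (j + 1) • z = c j • (P - z) + (c j - c (j + 1)) • z := by
      rw [smul_sub, sub_smul]; abel
    rw [hsplit]
    have hc01j := hc01 j (by omega)
    have h1 : ‖c j • (P - z)‖ ≤ ‖P - z‖ := by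
      rw [norm_smul]
      calc ‖c j‖ * ‖P - z‖ ≤ 1 * ‖P - z‖ := by
            apply mul_le_mul_of_nonneg_right _ (norm_nonneg _)
            rw [Real.norm_eq_abs, abs_le]
            exact ⟨by linarith [hc01j.1], hc01j.2⟩
        _ = ‖P - z‖ := one_mul _
    have h2 : ‖(c j - c (j + 1)) • z‖ ≤ 1 / N * M := by
      rw [norm_smul, Real.norm_eq_abs]
      exact mul_le_mul (hcdiff j) (hMb _ (by omega)) (norm_nonneg _) (by positivity)
    have h3 := norm_add_le (c j • (P - z)) ((c j - c (j + 1)) • z)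
    have h4 : 1 / (N:ℝ) * M = M / N := by ring
    calc ‖c j • (P - z) + (c j - c (j + 1)) • z‖
        ≤ ‖c j • (P - z)‖ + ‖(c j - c (j + 1)) • z‖ := h3
      _ ≤ ‖P - z‖ + 1 / N * M := add_le_add h1 h2
      _ < ε / 2 + ε / 2 := by rw [h4]; exact add_lt_add hnorm hNM
      _ = ε := by ring

end Aux


/-- For the linear delay control system (in its state space
formulation on the Hilbert space `M₂`, with strongly continuous solution semigroup
`T` — injective for all `t ≥ 0`, which corresponds to invertibility of `A_p` — with
convex compact control range `Ω` containing `0`), there exists a unique chain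
control set `E`, and `0 ∈ E`. -/


theorem stmt15 {M₂ : Type*} [NormedAddCommGroup M₂] [InnerProductSpace ℝ M₂]
    [CompleteSpace M₂] {m p : ℕ}
    (T : ℝ → M₂ →L[ℝ] M₂) (hT0 : T 0 = 1)
    (hsemi : ∀ t s : ℝ, 0 ≤ t → 0 ≤ s → T (t + s) = (T t).comp (T s))
    (hstrong : ∀ y : M₂, Continuous fun t : ℝ => T t y)
    -- injectivity of the delay semigroup; equivalent to invertibility of `A_p`
    (hinj : ∀ t : ℝ, 0 ≤ t → Function.Injective fun y : M₂ => T t y)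
    (B : ((Fin (p + 1)) → EuclideanSpace ℝ (Fin m)) →L[ℝ] M₂)
    (h : Fin (p + 1) → ℝ) (hmono : StrictMono h) (hh0 : h 0 = 0)
    (Ω : Set (EuclideanSpace ℝ (Fin m)))
    (hΩc : IsCompact Ω) (hΩconv : Convex ℝ Ω) (hΩ0 : (0 : EuclideanSpace ℝ (Fin m)) ∈ Ω) :
    ∃ E : Set M₂, IsChainControlSet (mildSol T B h) (Admissible Ω) E ∧
      (0 : M₂) ∈ E ∧
      ∀ E' : Set M₂, IsChainControlSet (mildSol T B h) (Admissible Ω) E' → E' = E := by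
  classical
  set φ := mildSol T B h with hφdef
  set 𝒰 := Admissible Ω with h𝒰def
  have hu0 : (fun _ : ℝ => (0 : EuclideanSpace ℝ (Fin m))) ∈ 𝒰 :=
    ⟨measurable_const, fun _ => hΩ0⟩
  have hφ0 : ∀ t : ℝ, φ t 0 (fun _ => 0) = 0 := fun t => mildSol_zero T B h t
  have hsm : ∀ (c t : ℝ) (y : M₂) (u : ℝ → EuclideanSpace ℝ (Fin m)),
      φ t (c • y) (fun s => c • u s) = c • φ t y u := fun c t y u => mildSol_smul T B h c t y u
  have had : ∀ c ∈ Set.Icc (0:ℝ) 1, ∀ u ∈ 𝒰, (fun s => c • u s) ∈ 𝒰 :=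
    fun c hc u hu => smul_mem_admissible hΩconv hΩ0 hc hu
  have hchain00 : ∀ ε > 0, ∀ τ > 0, ControlledChain φ 𝒰 ε τ (0:M₂) 0 := by
    intro ε hε τ hτ
    refine ⟨1, fun _ => 0, fun _ => fun _ => 0, fun _ => τ, le_refl 1, rfl, rfl, ?_⟩
    intro j hj
    refine ⟨hu0, le_refl τ, ?_⟩
    show ‖φ τ 0 (fun _ => 0) - 0‖ < ε
    rw [hφ0]
    simpa using hε
  -- chains between any chain-recurrent point and 0, via graded scaling
  have hto0 : ∀ y : M₂, (∀ ε > 0, ∀ τ > 0, ControlledChain φ 𝒰 ε τ y y) →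
      ∀ ε > 0, ∀ τ > 0, ControlledChain φ 𝒰 ε τ y 0 ∧ ControlledChain φ 𝒰 ε τ (0:M₂) y := by
    intro y hyy ε hε τ hτ
    constructor
    · have := chain_graded hsm had hyy (α := 0) (β := 1)
        (Set.mem_Icc.mpr ⟨le_refl 0, zero_le_one⟩) (Set.mem_Icc.mpr ⟨zero_le_one, le_refl 1⟩) hε hτ
      simpa using this
    · have := chain_graded hsm had hyy (α := 1) (β := 0)
        (Set.mem_Icc.mpr ⟨zero_le_one, le_refl 1⟩) (Set.mem_Icc.mpr ⟨le_refl 0, zero_le_one⟩) hε hτ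
      simpa using this
  -- {0} is weakly invariant and chain controllable
  have hWI0 : WeaklyInvariant φ 𝒰 {(0:M₂)} := by
    intro y hy
    rw [Set.mem_singleton_iff] at hy; subst hy
    exact ⟨fun _ => 0, hu0, fun _ => 0, rfl, fun s => rfl, fun s t ht => hφ0 t⟩
  set 𝒮 : Set (Set M₂) := {D | WeaklyInvariant φ 𝒰 D ∧ ChainControllable φ 𝒰 D ∧ (0:M₂) ∈ D}
    with h𝒮def
  set E : Set M₂ := ⋃₀ 𝒮 with hEdef
  have h0S : {(0:M₂)} ∈ 𝒮 := by
    refine ⟨hWI0, ⟨⟨0, rfl⟩, ?_⟩, rfl⟩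
    intro y hy z hz ε hε τ hτ
    rw [Set.mem_singleton_iff] at hy hz; subst hy; subst hz
    exact hchain00 ε hε τ hτ
  have h0E : (0:M₂) ∈ E := ⟨{0}, h0S, rfl⟩
  have hWIE : WeaklyInvariant φ 𝒰 E := by
    intro y hy
    obtain ⟨D, hD, hyD⟩ := hy
    obtain ⟨u, hu, γ, hγ0, hγmem, hγ⟩ := hD.1 y hyD
    exact ⟨u, hu, γ, hγ0, fun s => ⟨D, hD, hγmem s⟩, hγ⟩
  have hCCE : ChainControllable φ 𝒰 E := by
    refine ⟨⟨0, h0E⟩, ?_⟩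
    intro y hy z hz ε hε τ hτ
    obtain ⟨D1, hD1, hyD⟩ := hy
    obtain ⟨D2, hD2, hzD⟩ := hz
    exact chain_trans (hD1.2.1.2 y hyD 0 hD1.2.2 ε hε τ hτ)
      (hD2.2.1.2 0 hD2.2.2 z hzD ε hε τ hτ)
  have hmax : ∀ E' : Set M₂, E ⊆ E' → WeaklyInvariant φ 𝒰 E' → ChainControllable φ 𝒰 E' →
      E' = E := by
    intro E' hsub hWI hCC
    exact le_antisymm (Set.subset_sUnion_of_mem ⟨hWI, hCC, hsub h0E⟩) hsub
  -- every chain control set contains 0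
  have hzero_mem : ∀ E' : Set M₂, IsChainControlSet φ 𝒰 E' → (0:M₂) ∈ E' := by
    rintro E' ⟨hWI', hCC', hmax'⟩
    have hWI'' : WeaklyInvariant φ 𝒰 (insert 0 E') := by
      intro y hy
      rcases Set.mem_insert_iff.mp hy with rfl | hyE
      · exact ⟨fun _ => 0, hu0, fun _ => 0, rfl, fun s => Set.mem_insert _ _,
          fun s t ht => hφ0 t⟩
      · obtain ⟨u, hu, γ, hγ0, hγmem, hγ⟩ := hWI' y hyE
        exact ⟨u, hu, γ, hγ0, fun s => Set.mem_insert_of_mem _ (hγmem s), hγ⟩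
    have hCC'' : ChainControllable φ 𝒰 (insert 0 E') := by
      refine ⟨⟨0, Set.mem_insert _ _⟩, ?_⟩
      intro y hy z hz ε hε τ hτ
      rcases Set.mem_insert_iff.mp hy with rfl | hyE <;>
        rcases Set.mem_insert_iff.mp hz with rfl | hzE
      · exact hchain00 ε hε τ hτ
      · exact (hto0 z (fun ε hε τ hτ => hCC'.2 z hzE z hzE ε hε τ hτ) ε hε τ hτ).2
      · exact (hto0 y (fun ε hε τ hτ => hCC'.2 y hyE y hyE ε hε τ hτ) ε hε τ hτ).1
      · exact hCC'.2 y hyE z hzE ε hε τ hτ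
    have heq := hmax' (insert 0 E') (Set.subset_insert _ _) hWI'' hCC''
    rw [← heq]
    exact Set.mem_insert _ _
  refine ⟨E, ⟨hWIE, hCCE, hmax⟩, h0E, ?_⟩
  intro E' hE'
  have h0E' := hzero_mem E' hE'
  have hsub : E' ⊆ E := Set.subset_sUnion_of_mem ⟨hE'.1, hE'.2.1, h0E'⟩
  exact (hE'.2.2 E hsub hWIE hCCE).symm
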